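/- (Core of Theorem 2.) Let M be the model of an interpreted system with regular labelling, and for n ≥ 1 let ⊨_{≤n} be the satisfaction relation defined by the same clauses as ⊨ except that in the clauses for K_i, C_Γ and ⟨X⟩ the quantified interval I' is additionally required to satisfy |I'| ≤ n. Then for every EHS⁺_{BDE} formula φ (i.e. an EHS⁺ formula whose modalities are all among K_i, C_Γ, ⟨B⟩, ⟨D⟩, ⟨E⟩) and every interval I with |I| ≤ n: M,I ⊨ φ if and only if M,I ⊨_{≤n} φ. In particular, if I R_X I' for X ∈ {B,D,E} then |I'| < |I|, and if I ∼_i I' or I ∼_Γ I' then |I'| = |I|. -/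

import Mathlib

/-- The Halpern-Shoham interval modalities. -/
inductive HSMod : Type where
  | A | Abar | B | Bbar | D | Dbar | E | Ebar | L | Lbar | N | Nbar | O | Obar
  deriving DecidableEq

/-- Formulas of the logic EHS⁺ over agents `0,…,m` and propositional variables `V`. -/
inductive EHSFormula (m : ℕ) (V : Type) : Type where
  | pt : EHSFormula m V
  | prop : V → EHSFormula m V
  | neg : EHSFormula m V → EHSFormula m V
  | conj : EHSFormula m V → EHSFormula m V → EHSFormula m V
  | know : Fin (m + 1) → EHSFormula m V → EHSFormula m V
  | common : Finset (Fin (m + 1)) → EHSFormula m V → EHSFormula m V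
  | dia : HSMod → EHSFormula m V → EHSFormula m V
  deriving DecidableEq

/-- An interpreted system with regular labelling over agents `0,…,m` (agent `0` is the
environment) and variables `Var`. -/
structure ISRL (m : ℕ) (Var : Type) where
  L : Fin (m + 1) → Type
  finL : ∀ i, Fintype (L i)
  l0 : ∀ i, L i
  ACT : Fin (m + 1) → Type
  finACT : ∀ i, Fintype (ACT i)
  P : ∀ i, L i → Set (ACT i)
  T : ∀ i, L i → (∀ j, ACT j) → L i → Prop
  lab : Var → RegularExpression (∀ i, L i)

attribute [instance] ISRL.finL ISRL.finACT

namespace ISRL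

variable {m : ℕ} {Var : Type}

/-- Global configurations. -/
abbrev G (IS : ISRL m Var) : Type := ∀ i, IS.L i

instance (IS : ISRL m Var) : Fintype IS.G := Pi.instFintype

/-- The initial global configuration. -/
def g0 (IS : ISRL m Var) : IS.G := IS.l0

/-- The global transition relation `t^G`. -/
def tG (IS : ISRL m Var) (g g' : IS.G) : Prop :=
  ∃ a : ∀ j, IS.ACT j, ∀ i, a i ∈ IS.P i (g i) ∧ IS.T i (g i) a (g' i)

/-- A partial state: a nonempty `t^G`-chain of configurations. -/
def IsPState (IS : ISRL m Var) (w : List IS.G) : Prop :=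
  w ≠ [] ∧ w.Chain' IS.tG

/-- A global state of the model: a partial state starting at the initial configuration. -/
def IsState (IS : ISRL m Var) (w : List IS.G) : Prop :=
  IS.IsPState w ∧ w.head? = some IS.g0

/-- `g(s)`: the actual configuration of a (partial) state, i.e. its last configuration. -/
def gOf (IS : ISRL m Var) (w : List IS.G) : IS.G := w.getLastD IS.g0

/-- The global transition relation `t` of the model: extension by exactly one configuration. -/
def step (IS : ISRL m Var) (w w' : List IS.G) : Prop := ∃ g : IS.G, w' = w ++ [g]

/-- Epistemic indistinguishability of states for agent `i`. -/
def simS (IS : ISRL m Var) (i : Fin (m + 1)) (w w' : List IS.G) : Prop :=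
  IS.gOf w i = IS.gOf w' i

/-- An interval of the model: a nonempty `t`-path of global states. -/
def IsInterval (IS : ISRL m Var) (l : List (List IS.G)) : Prop :=
  l ≠ [] ∧ (∀ w ∈ l, IS.IsState w) ∧ l.Chain' IS.step

/-- Intervals of the model of `IS`. -/
structure Interval (IS : ISRL m Var) : Type where
  seq : List (List IS.G)
  isInterval : IS.IsInterval seq

namespace Interval

variable {IS : ISRL m Var}

/-- `first(I)`. -/
def first (I : Interval IS) : List IS.G := I.seq.headD []

/-- `last(I)`. -/
def last (I : Interval IS) : List IS.G := I.seq.getLastD []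

/-- `I` is a point interval. -/
def isPt (I : Interval IS) : Prop := I.seq.length = 1

/-- `g(I)`, the word of configurations read along `I`. -/
def gword (I : Interval IS) : List IS.G := I.seq.map IS.gOf

end Interval

section rels

variable {IS : ISRL m Var}

def relA (I I' : Interval IS) : Prop := I'.first = I.last
def relB (I I' : Interval IS) : Prop :=
  ∃ J : List (List IS.G), J ≠ [] ∧ I.seq = I'.seq ++ J
def relD (I I' : Interval IS) : Prop :=
  ∃ J K : List (List IS.G), J ≠ [] ∧ K ≠ [] ∧ I.seq = J ++ I'.seq ++ K
def relE (I I' : Interval IS) : Prop :=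
  ∃ J : List (List IS.G), J ≠ [] ∧ I.seq = J ++ I'.seq
def relL (I I' : Interval IS) : Prop := Relation.TransGen IS.step I.last I'.first
def relN (I I' : Interval IS) : Prop := IS.step I.last I'.first
def relO (I I' : Interval IS) : Prop :=
  ∃ J K : List (List IS.G), J ≠ [] ∧ K ≠ [] ∧ I.seq ++ J = K ++ I'.seq ∧
    IS.IsInterval (I.seq ++ J)

end rels

/-- The Allen relations on intervals of the model of `IS`. -/
def hsRel (IS : ISRL m Var) : HSMod → Interval IS → Interval IS → Prop
  | .A => fun I I' => relA I I'
  | .Abar => fun I I' => relA I' I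
  | .B => fun I I' => relB I I'
  | .Bbar => fun I I' => relB I' I
  | .D => fun I I' => relD I I'
  | .Dbar => fun I I' => relD I' I
  | .E => fun I I' => relE I I'
  | .Ebar => fun I I' => relE I' I
  | .L => fun I I' => relL I I'
  | .Lbar => fun I I' => relL I' I
  | .N => fun I I' => relN I I'
  | .Nbar => fun I I' => relN I' I
  | .O => fun I I' => relO I I'
  | .Obar => fun I I' => relO I' I

/-- Epistemic indistinguishability of intervals for agent `i`. -/
def simI (IS : ISRL m Var) (i : Fin (m + 1)) (I I' : Interval IS) : Prop :=
  List.Forall₂ (IS.simS i) I.seq I'.seq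

/-- `∼_Γ`: the transitive closure of the union of the `∼_i`, `i ∈ Γ`. -/
def simC (IS : ISRL m Var) (Γ : Finset (Fin (m + 1))) : Interval IS → Interval IS → Prop :=
  Relation.TransGen (fun I I' => ∃ i ∈ Γ, IS.simI i I I')

/-- Satisfaction of EHS⁺ formulas at an interval, with respect to a labelling `lab`. -/
def Sat (IS : ISRL m Var) {W : Type} (lab : W → RegularExpression IS.G) :
    EHSFormula m W → Interval IS → Prop
  | .pt, I => I.isPt
  | .prop p, I => I.gword ∈ (lab p).matches'
  | .neg φ, I => ¬ Sat IS lab φ I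
  | .conj φ ψ, I => Sat IS lab φ I ∧ Sat IS lab ψ I
  | .know i φ, I => ∀ I', IS.simI i I' I → Sat IS lab φ I'
  | .common Γ φ, I => ∀ I', IS.simC Γ I' I → Sat IS lab φ I'
  | .dia X φ, I => ∃ I', IS.hsRel X I I' ∧ Sat IS lab φ I'

end ISRL

/-- The `BDE` fragment of EHS⁺: all modalities are among `K_i`, `C_Γ`, `⟨B⟩`, `⟨D⟩`, `⟨E⟩`. -/
def IsBDE {m : ℕ} {V : Type} : EHSFormula m V → Prop
  | .pt => True
  | .prop _ => True
  | .neg φ => IsBDE φ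
  | .conj φ ψ => IsBDE φ ∧ IsBDE ψ
  | .know _ φ => IsBDE φ
  | .common _ φ => IsBDE φ
  | .dia X φ => (X = HSMod.B ∨ X = HSMod.D ∨ X = HSMod.E) ∧ IsBDE φ

namespace ISRL

variable {m : ℕ} {Var : Type}

/-- The satisfaction relation `⊨_{≤n}`: as `⊨`, except that in the clauses for `K_i`, `C_Γ`
and `⟨X⟩` the quantified interval `I'` is additionally required to satisfy `|I'| ≤ n`. -/
def SatN (IS : ISRL m Var) {W : Type} (lab : W → RegularExpression IS.G) (n : ℕ) :
    EHSFormula m W → Interval IS → Prop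
  | .pt, I => I.isPt
  | .prop p, I => I.gword ∈ (lab p).matches'
  | .neg φ, I => ¬ SatN IS lab n φ I
  | .conj φ ψ, I => SatN IS lab n φ I ∧ SatN IS lab n ψ I
  | .know i φ, I => ∀ I', IS.simI i I' I → I'.seq.length ≤ n → SatN IS lab n φ I'
  | .common Γ φ, I => ∀ I', IS.simC Γ I' I → I'.seq.length ≤ n → SatN IS lab n φ I'
  | .dia X φ, I => ∃ I', IS.hsRel X I I' ∧ I'.seq.length ≤ n ∧ SatN IS lab n φ I'

end ISRL

namespace ISRL

variable {m : ℕ} {Var : Type} {IS : ISRL m Var}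

theorem length_lt_of_relB {I I' : Interval IS} (h : relB I I') :
    I'.seq.length < I.seq.length := by
  obtain ⟨J, hJ, hI⟩ := h
  have hJ := List.length_pos_iff.2 hJ
  rw [hI, List.length_append]
  omega

theorem length_lt_of_relD {I I' : Interval IS} (h : relD I I') :
    I'.seq.length < I.seq.length := by
  obtain ⟨J, K, -, hK, hI⟩ := h
  have hK := List.length_pos_iff.2 hK
  rw [hI, List.length_append, List.length_append]
  omega

theorem length_lt_of_relE {I I' : Interval IS} (h : relE I I') :
    I'.seq.length < I.seq.length := by
  obtain ⟨J, hJ, hI⟩ := h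
  have hJ := List.length_pos_iff.2 hJ
  rw [hI, List.length_append]
  omega

theorem length_lt_of_hsRel_BDE {X : HSMod} (hX : X = HSMod.B ∨ X = HSMod.D ∨ X = HSMod.E)
    {I I' : Interval IS} (h : IS.hsRel X I I') : I'.seq.length < I.seq.length := by
  rcases hX with rfl | rfl | rfl
  · exact length_lt_of_relB h
  · exact length_lt_of_relD h
  · exact length_lt_of_relE h

theorem length_eq_of_simI {i : Fin (m + 1)} {I I' : Interval IS} (h : IS.simI i I I') :
    I'.seq.length = I.seq.length :=
  h.length_eq.symm

theorem length_eq_of_simC {Γ : Finset (Fin (m + 1))} {I I' : Interval IS}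
    (h : IS.simC Γ I I') : I'.seq.length = I.seq.length := by
  induction h with
  | single h => obtain ⟨_, -, h⟩ := h; exact length_eq_of_simI h
  | tail _ h ih => obtain ⟨_, -, h⟩ := h; exact (length_eq_of_simI h).trans ih

/- Every modality of the BDE fragment quantifies over intervals no longer than the current one,
so the bound `|I'| ≤ n` in the clauses of `SatN` never excludes a witness. -/
theorem sat_iff_satN {W : Type} (lab : W → RegularExpression IS.G) {n : ℕ}
    {φ : EHSFormula m W} (hφ : IsBDE φ) {I : Interval IS} (hI : I.seq.length ≤ n) :
    Sat IS lab φ I ↔ SatN IS lab n φ I := by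
  induction φ generalizing I with
  | pt => rfl
  | prop p => rfl
  | neg φ ih => exact not_congr (ih hφ hI)
  | conj φ ψ ihφ ihψ => exact and_congr (ihφ hφ.1 hI) (ihψ hφ.2 hI)
  | know i φ ih =>
    refine forall_congr' fun I' => forall_congr' fun hsim => ?_
    have hI' : I'.seq.length ≤ n := (length_eq_of_simI hsim).symm.trans_le hI
    exact (ih hφ hI').trans (imp_iff_right hI').symm
  | common Γ φ ih =>
    refine forall_congr' fun I' => forall_congr' fun hsim => ?_
    have hI' : I'.seq.length ≤ n := (length_eq_of_simC hsim).symm.trans_le hI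
    exact (ih hφ hI').trans (imp_iff_right hI').symm
  | dia X φ ih =>
    constructor
    · rintro ⟨I', hrel, hsat⟩
      have hI' : I'.seq.length ≤ n := (length_lt_of_hsRel_BDE hφ.1 hrel).le.trans hI
      exact ⟨I', hrel, hI', (ih hφ.2 hI').1 hsat⟩
    · rintro ⟨I', hrel, hI', hsat⟩
      exact ⟨I', hrel, (ih hφ.2 hI').2 hsat⟩

end ISRL

open ISRL in
theorem stmt4 {m : ℕ} {Var : Type} (IS : ISRL m Var) (n : ℕ) :
    (∀ φ : EHSFormula m Var, IsBDE φ → ∀ I : ISRL.Interval IS, I.seq.length ≤ n →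
        (Sat IS IS.lab φ I ↔ SatN IS IS.lab n φ I))
    ∧ (∀ X : HSMod, (X = HSMod.B ∨ X = HSMod.D ∨ X = HSMod.E) →
        ∀ I I' : ISRL.Interval IS, IS.hsRel X I I' → I'.seq.length < I.seq.length)
    ∧ (∀ (i : Fin (m + 1)) (I I' : ISRL.Interval IS),
        IS.simI i I I' → I'.seq.length = I.seq.length)
    ∧ (∀ (Γ : Finset (Fin (m + 1))) (I I' : ISRL.Interval IS),
        IS.simC Γ I I' → I'.seq.length = I.seq.length) := by
  exact ⟨fun φ hφ I hI => sat_iff_satN IS.lab hφ hI,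
    fun _ hX _ _ h => length_lt_of_hsRel_BDE hX h,
    fun _ _ _ h => length_eq_of_simI h,
    fun _ _ _ h => length_eq_of_simC h⟩
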